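/- arXiv:1911.08643 — 3 statements merged into one kernel-verified Lean document; each statement's English description precedes it below -/
import Mathlib

section
/- For every a > 0, ε > 0 and ξ ≠ 0, the first derivative of the function ξ ↦ e^{-ε|ξ|^a} is bounded in absolute value by C/|ξ| and the second derivative by C/|ξ|², where C depends only on a. -/
open Real Filter

private lemma aux_te (t : ℝ) (ht : 0 ≤ t) : t * Real.exp (-t) ≤ 1 := by
  have h := Real.add_one_le_exp t
  have hpos := Real.exp_pos t
  rw [Real.exp_neg]
  rw [mul_inv_le_iff₀ hpos, one_mul]
  linarith

private lemma aux_t2e (t : ℝ) (ht : 0 ≤ t) : t ^ 2 * Real.exp (-t) ≤ 4 := by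
  have h := aux_te (t / 2) (by linarith)
  have h2 : (t / 2 * Real.exp (-(t / 2))) ^ 2 ≤ 1 ^ 2 := by
    apply pow_le_pow_left₀ (by positivity) h
  have h3 : Real.exp (-(t / 2)) ^ 2 = Real.exp (-t) := by
    rw [← Real.exp_nat_mul]; norm_num; ring_nf
  nlinarith [Real.exp_pos (-t)]

theorem deriv_bounds_exp_neg_eps_abs_rpow (a : ℝ) (ha : 0 < a) :
    ∃ C : ℝ, 0 < C ∧ ∀ ε : ℝ, 0 < ε → ∀ ξ : ℝ, ξ ≠ 0 →
      |deriv (fun x : ℝ => Real.exp (-ε * |x| ^ a)) ξ| ≤ C / |ξ| ∧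
      |deriv (deriv (fun x : ℝ => Real.exp (-ε * |x| ^ a))) ξ| ≤ C / ξ ^ 2 := by
  refine ⟨4 * a ^ 2 + a * (a + 1) + a, by positivity, ?_⟩
  intro ε hε ξ hξ
  set C := 4 * a ^ 2 + a * (a + 1) + a with hC
  -- derivative formula at every nonzero point
  have key : ∀ x : ℝ, x ≠ 0 → HasDerivAt (fun y : ℝ => Real.exp (-ε * |y| ^ a))
      (Real.exp (-ε * |x| ^ a) * (-ε * (a * |x| ^ (a - 1) * (SignType.sign x : ℝ)))) x := by
    intro x hx
    have h1 := hasDerivAt_abs hx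
    have h2 := Real.hasDerivAt_rpow_const (x := |x|) (p := a) (Or.inl (abs_ne_zero.2 hx))
    exact ((h2.comp x h1).const_mul (-ε)).exp
  have hd1 : ∀ x : ℝ, x ≠ 0 → deriv (fun y : ℝ => Real.exp (-ε * |y| ^ a)) x =
      Real.exp (-ε * |x| ^ a) * (-ε * (a * |x| ^ (a - 1) * (SignType.sign x : ℝ))) :=
    fun x hx => (key x hx).deriv
  -- local constancy of sign
  obtain ⟨s, hs1, hsev⟩ : ∃ s : ℝ, (s = 1 ∨ s = -1) ∧
      ∀ᶠ x in nhds ξ, (SignType.sign x : ℝ) = s := by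
    rcases hξ.lt_or_gt with h | h
    · exact ⟨-1, Or.inr rfl, by
        filter_upwards [Iio_mem_nhds h] with x hx
        simp [sign_neg (Set.mem_Iio.1 hx)]⟩
    · exact ⟨1, Or.inl rfl, by
        filter_upwards [Ioi_mem_nhds h] with x hx
        simp [sign_pos (Set.mem_Ioi.1 hx)]⟩
  have hs0 : (SignType.sign ξ : ℝ) = s := hsev.self_of_nhds
  have hs2 : s * s = 1 := by rcases hs1 with rfl | rfl <;> norm_num
  have hsabs : |s| = 1 := by rcases hs1 with rfl | rfl <;> norm_num
  set r := |ξ| with hrdef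
  have hr : 0 < r := abs_pos.2 hξ
  set t := ε * r ^ a with htdef
  have ht : 0 < t := by positivity
  have hq : r ^ (a - 1) = r ^ a / r := by rw [Real.rpow_sub hr, Real.rpow_one]
  have hp : r ^ (a - 1 - 1) = r ^ a / (r * r) := by
    rw [Real.rpow_sub hr, Real.rpow_sub hr, Real.rpow_one]
    ring
  have hr2 : r * r = ξ ^ 2 := by rw [← sq, hrdef, sq_abs]
  constructor
  · -- first derivative bound
    rw [hd1 ξ hξ, hs0]
    rw [abs_mul, Real.abs_exp, abs_mul, abs_neg, abs_of_pos hε, abs_mul, hsabs, mul_one,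
      abs_mul, abs_of_pos ha, abs_of_nonneg (Real.rpow_nonneg (abs_nonneg ξ) _)]
    have heq : Real.exp (-ε * r ^ a) * (ε * (a * r ^ (a - 1))) =
        a * (t * Real.exp (-t)) / r := by
      rw [hq, htdef]; field_simp
    rw [heq]
    gcongr
    nlinarith [aux_te t ht.le]
  · -- second derivative bound
    have h6 : HasDerivAt (fun y : ℝ => |y| ^ (a - 1))
        ((a - 1) * r ^ (a - 1 - 1) * (SignType.sign ξ : ℝ)) ξ := by
      have h1 := hasDerivAt_abs hξ
      have h2 := Real.hasDerivAt_rpow_const (x := |ξ|) (p := a - 1) (Or.inl (abs_ne_zero.2 hξ))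
      exact h2.comp ξ h1
    rw [hs0] at h6
    have hkey := key ξ hξ
    rw [hs0] at hkey
    have hP : HasDerivAt (fun x : ℝ => (-ε * a * s) * (Real.exp (-ε * |x| ^ a) * |x| ^ (a - 1)))
        ((-ε * a * s) * (Real.exp (-ε * r ^ a) * (-ε * (a * r ^ (a - 1) * s)) * r ^ (a - 1)
          + Real.exp (-ε * r ^ a) * ((a - 1) * r ^ (a - 1 - 1) * s))) ξ :=
      (hkey.mul h6).const_mul (-ε * a * s)
    have hev2 : deriv (fun x : ℝ => Real.exp (-ε * |x| ^ a)) =ᶠ[nhds ξ]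
        fun x => (-ε * a * s) * (Real.exp (-ε * |x| ^ a) * |x| ^ (a - 1)) := by
      filter_upwards [eventually_ne_nhds hξ, hsev] with x hx hsx
      rw [hd1 x hx, hsx]; ring
    rw [hev2.deriv_eq, hP.deriv]
    have hEeq : -ε * r ^ a = -t := by rw [htdef]; ring
    have hVeq : (-ε * a * s) * (Real.exp (-ε * r ^ a) * (-ε * (a * r ^ (a - 1) * s)) * r ^ (a - 1)
          + Real.exp (-ε * r ^ a) * ((a - 1) * r ^ (a - 1 - 1) * s))
        = (a ^ 2 * (t ^ 2 * Real.exp (-t)) - a * (a - 1) * (t * Real.exp (-t))) / ξ ^ 2 := by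
      rcases hs1 with rfl | rfl <;>
        · rw [hq, hp, hEeq, ← hr2, htdef]
          field_simp
          ring
    rw [hVeq]
    have hx2 : (0 : ℝ) < ξ ^ 2 := by positivity
    rw [abs_div, abs_of_pos hx2]
    gcongr
    have h1 := aux_te t ht.le
    have h2 := aux_t2e t ht.le
    have h3 : 0 ≤ t * Real.exp (-t) := by positivity
    have h4 : 0 ≤ t ^ 2 * Real.exp (-t) := by positivity
    rw [abs_le]
    constructor <;> nlinarith [sq_nonneg a, mul_pos ha ha,
      mul_nonneg ha.le h3, mul_nonneg ha.le (sub_nonneg.2 h1),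
      mul_nonneg (mul_nonneg ha.le ha.le) (sub_nonneg.2 h2)]
end

section
/- Let γ > 1, N ≥ 1, A = [-N, -N/2], and f_A with f̂_A = χ_A. Then for every x ∈ [0, N^{-1/γ}], choosing t = x one has sup_{0<t<1} |P^t_{1,γ} f_A(x)| ≥ c N for an absolute constant c > 0, while ‖f_A‖_{H^s} ≍ N^{s+1/2}. -/
open MeasureTheory

/-- Fourier transform with the normalization `f(x) = ∫ f̂(ξ) e^{ixξ} dξ`. -/
noncomputable def ftransform (f : ℝ → ℂ) (ξ : ℝ) : ℂ :=
  (1 / (2 * Real.pi)) * ∫ x : ℝ, f x * Complex.exp (-Complex.I * ((x * ξ : ℝ) : ℂ))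

/-- The fractional Schrödinger evolution with complex time `g(t) = t + i t^γ`,
applied to a function with Fourier transform `fhat`. -/
noncomputable def Pop (a γ : ℝ) (fhat : ℝ → ℂ) (t x : ℝ) : ℂ :=
  ∫ ξ : ℝ, fhat ξ *
    Complex.exp (Complex.I * ((t * |ξ| ^ a : ℝ) : ℂ) - ((t ^ γ * |ξ| ^ a : ℝ) : ℂ)) *
    Complex.exp (Complex.I * ((x * ξ : ℝ) : ℂ))

/-- The maximal operator `P*_{a,γ} f(x) = sup_{0<t<1} |P^t_{a,γ} f(x)|`. -/
noncomputable def Pstar (a γ : ℝ) (fhat : ℝ → ℂ) (x : ℝ) : ℝ :=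
  ⨆ t : Set.Ioo (0 : ℝ) 1, ‖Pop a γ fhat t x‖

/-- The function with Fourier transform equal to the indicator of A = [-N, -N/2]. -/
noncomputable def fhatA (N : ℝ) : ℝ → ℂ :=
  Set.indicator (Set.Icc (-N) (-N / 2)) (fun _ => (1 : ℂ))

/-!
For `ξ ≤ 0` the phase `t|ξ| + xξ` equals `(x - t)ξ`. So if `|x - t| ≤ 1/(2N)` and
`t^γ N ≤ 1`, the integrand of `P^t f_A(x)` has real part at least `e⁻¹ / 2 ≥ 1/6`
on all of `A = [-N, -N/2]`, and integrating over `A`, of length `N/2`, gives `|P^t f_A(x)| ≥ N/12`.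
For the Sobolev norm it suffices that `(1 + ξ²)^s` is comparable to `N^(2s)` on `A`.
-/

open Set

namespace HalfWave

noncomputable def popKernel (a γ t x ξ : ℝ) : ℂ :=
  Complex.exp (Complex.I * ((t * |ξ| ^ a : ℝ) : ℂ) - ((t ^ γ * |ξ| ^ a : ℝ) : ℂ)) *
    Complex.exp (Complex.I * ((x * ξ : ℝ) : ℂ))

lemma continuous_popKernel (a γ t x : ℝ) (ha : 0 ≤ a) : Continuous (popKernel a γ t x) := by
  unfold popKernel
  have : Continuous fun ξ : ℝ => |ξ| ^ a := continuous_abs.rpow_const fun _ => Or.inr ha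
  fun_prop

lemma Pop_indicator_one (a γ : ℝ) {S : Set ℝ} (hS : MeasurableSet S) (t x : ℝ) :
    Pop a γ (S.indicator fun _ => 1) t x = ∫ ξ in S, popKernel a γ t x ξ := by
  rw [← integral_indicator hS]
  unfold Pop
  congr 1
  funext ξ
  by_cases hξ : ξ ∈ S <;> simp [hξ, popKernel]

lemma re_popKernel (a γ t x ξ : ℝ) :
    (popKernel a γ t x ξ).re =
      Real.exp (-(t ^ γ * |ξ| ^ a)) * Real.cos (t * |ξ| ^ a + x * ξ) := by
  rw [popKernel, ← Complex.exp_add, Complex.exp_re]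
  congr 2 <;> simp

lemma norm_popKernel_le_one (a γ x ξ : ℝ) {t : ℝ} (ht : 0 ≤ t) :
    ‖popKernel a γ t x ξ‖ ≤ 1 := by
  rw [popKernel, ← Complex.exp_add, Complex.norm_exp, Real.exp_le_one_iff]
  simp only [Complex.add_re, Complex.sub_re, Complex.mul_re, Complex.I_re, Complex.I_im,
    Complex.ofReal_re, Complex.ofReal_im]
  nlinarith [mul_nonneg (Real.rpow_nonneg ht γ) (Real.rpow_nonneg (abs_nonneg ξ) a)]

lemma norm_Pop_indicator_one_le (a γ x : ℝ) {S : Set ℝ} (hS : MeasurableSet S)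
    (hS_fin : volume S < ⊤) {t : ℝ} (ht : 0 ≤ t) :
    ‖Pop a γ (S.indicator fun _ => 1) t x‖ ≤ volume.real S := by
  rw [Pop_indicator_one a γ hS]
  simpa using norm_setIntegral_le_of_norm_le_const hS_fin
    fun ξ _ => norm_popKernel_le_one a γ x ξ ht

lemma norm_Pop_indicator_one_le_Pstar (a γ x : ℝ) {S : Set ℝ} (hS : MeasurableSet S)
    (hS_fin : volume S < ⊤) (t : Ioo (0 : ℝ) 1) :
    ‖Pop a γ (S.indicator fun _ => 1) t x‖ ≤ Pstar a γ (S.indicator fun _ => 1) x :=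
  le_ciSup ⟨volume.real S, by
    rintro _ ⟨s, rfl⟩
    exact norm_Pop_indicator_one_le a γ x hS hS_fin s.2.1.le⟩ t

lemma one_sixth_le_re_popKernel_one {γ t x ξ : ℝ} (hξ : ξ ≤ 0) (hdamp : t ^ γ * |ξ| ≤ 1)
    (hphase : |(x - t) * ξ| ≤ 1) : 1 / 6 ≤ (popKernel 1 γ t x ξ).re := by
  have hexp : 1 / 3 ≤ Real.exp (-(t ^ γ * |ξ|)) :=
    calc (1 / 3 : ℝ) ≤ Real.exp (-1) := by linarith [Real.exp_neg_one_gt_d9]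
      _ ≤ _ := Real.exp_le_exp.mpr (by linarith)
  have hcos : 1 / 2 ≤ Real.cos ((x - t) * ξ) := by
    have hsq : ((x - t) * ξ) ^ 2 ≤ 1 := by
      rw [← sq_abs]; exact pow_le_one₀ (abs_nonneg _) hphase
    linarith [Real.one_sub_sq_div_two_le_cos (x := (x - t) * ξ)]
  rw [re_popKernel, Real.rpow_one, abs_of_nonpos hξ, show t * -ξ + x * ξ = (x - t) * ξ by ring]
  rw [abs_of_nonpos hξ] at hexp
  nlinarith

lemma inv_le_rpow_neg_one_div {N γ : ℝ} (hN : 1 ≤ N) (hγ : 1 ≤ γ) :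
    N⁻¹ ≤ N ^ (-1 / γ) := by
  rw [← Real.rpow_neg_one]
  exact Real.rpow_le_rpow_of_exponent_le hN
    (by rw [neg_div, neg_le_neg_iff]; exact div_le_one_of_le₀ hγ (by linarith))

lemma rpow_mul_le_one_of_le_rpow_neg_one_div {N γ t : ℝ} (hN : 0 < N) (hγ : 0 < γ)
    (ht : 0 ≤ t) (htN : t ≤ N ^ (-1 / γ)) : t ^ γ * N ≤ 1 := by
  have : t ^ γ ≤ N⁻¹ :=
    calc t ^ γ ≤ (N ^ (-1 / γ)) ^ γ := Real.rpow_le_rpow ht htN hγ.le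
      _ = N⁻¹ := by rw [← Real.rpow_mul hN.le, div_mul_cancel₀ _ hγ.ne', Real.rpow_neg_one]
  calc t ^ γ * N ≤ N⁻¹ * N := by gcongr
    _ = 1 := inv_mul_cancel₀ hN.ne'

/-- The time `t = x` itself may be `0`, so a time within `1 / (2N)` of `x` is used instead. -/
lemma exists_time_near {γ N x : ℝ} (hγ : 1 < γ) (hN : 1 ≤ N)
    (hx : x ∈ Icc 0 (N ^ (-1 / γ))) :
    ∃ t ∈ Ioo (0 : ℝ) 1, |x - t| ≤ 1 / (2 * N) ∧ t ^ γ * N ≤ 1 := by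
  obtain ⟨hx0, hxN⟩ := hx
  have hN0 : 0 < N := by linarith
  set δ := 1 / (2 * N) with hδ
  have hδ0 : 0 < δ := by positivity
  have hδN : δ ≤ N ^ (-1 / γ) :=
    calc δ ≤ N⁻¹ := by rw [hδ, one_div]; gcongr; linarith
      _ ≤ _ := inv_le_rpow_neg_one_div hN hγ.le
  have hδ_half : δ ≤ 1 / 2 := by rw [hδ]; gcongr; linarith
  have hx1 : x ≤ 1 :=
    hxN.trans (Real.rpow_le_one_of_one_le_of_nonpos hN (div_nonpos_of_nonpos_of_nonneg
      (by norm_num) (by linarith)))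
  refine ⟨max (x - δ) δ, ⟨hδ0.trans_le (le_max_right _ _), max_lt (by linarith) (by linarith)⟩,
    ?_, rpow_mul_le_one_of_le_rpow_neg_one_div hN0 (by linarith) (hδ0.le.trans (le_max_right _ _))
      (max_le (by linarith) hδN)⟩
  rw [abs_le]
  constructor <;> cases max_cases (x - δ) δ <;> linarith

theorem one_div_twelve_mul_le_Pstar_fhatA {γ N x : ℝ} (hγ : 1 < γ) (hN : 1 ≤ N)
    (hx : x ∈ Icc 0 (N ^ (-1 / γ))) : 1 / 12 * N ≤ Pstar 1 γ (fhatA N) x := by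
  obtain ⟨t, ht, hxt, hdamp⟩ := exists_time_near hγ hN hx
  have hA : MeasurableSet (Icc (-N) (-N / 2)) := measurableSet_Icc
  have hvol : volume.real (Icc (-N) (-N / 2)) = N / 2 := by
    rw [Real.volume_real_Icc_of_le (by linarith)]; ring
  have hre : ∀ ξ ∈ Icc (-N) (-N / 2), 1 / 6 ≤ (popKernel 1 γ t x ξ).re := by
    rintro ξ ⟨hξl, hξr⟩
    have hξN : |ξ| ≤ N := abs_le.mpr ⟨hξl, by linarith⟩
    refine one_sixth_le_re_popKernel_one (by linarith) ?_ ?_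
    · exact (mul_le_mul_of_nonneg_left hξN (Real.rpow_nonneg ht.1.le γ)).trans hdamp
    · calc |(x - t) * ξ| = |x - t| * |ξ| := abs_mul _ _
        _ ≤ 1 / (2 * N) * N := by gcongr
        _ ≤ 1 := by field_simp; linarith
  have hint : IntegrableOn (popKernel 1 γ t x) (Icc (-N) (-N / 2)) :=
    (continuous_popKernel 1 γ t x zero_le_one).integrableOn_Icc
  calc 1 / 12 * N = 1 / 6 * volume.real (Icc (-N) (-N / 2)) := by rw [hvol]; ring
    _ ≤ ∫ ξ in Icc (-N) (-N / 2), (popKernel 1 γ t x ξ).re :=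
        setIntegral_ge_of_const_le_real hA measure_Icc_lt_top.ne hre hint.re
    _ = (Pop 1 γ (fhatA N) t x).re := by
        rw [fhatA, Pop_indicator_one 1 γ hA]; exact integral_re hint
    _ ≤ ‖Pop 1 γ (fhatA N) t x‖ := Complex.re_le_norm _
    _ ≤ Pstar 1 γ (fhatA N) x :=
        norm_Pop_indicator_one_le_Pstar 1 γ x hA measure_Icc_lt_top ⟨t, ht⟩

lemma integral_mul_norm_fhatA_sq (w : ℝ → ℝ) (N : ℝ) :
    ∫ ξ, w ξ * ‖fhatA N ξ‖ ^ 2 = ∫ ξ in Icc (-N) (-N / 2), w ξ := by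
  rw [← integral_indicator measurableSet_Icc]
  congr 1
  funext ξ
  by_cases hξ : ξ ∈ Icc (-N) (-N / 2) <;> simp [fhatA, hξ]

lemma setIntegral_mem_Icc_of_mem_Icc {α : Type*} [MeasurableSpace α] {μ : Measure α}
    {S : Set α} {f : α → ℝ} {a b : ℝ} (hS : MeasurableSet S) (hμS : μ S ≠ ⊤)
    (hf : ∀ x ∈ S, f x ∈ Icc a b) (hint : IntegrableOn f S μ) :
    ∫ x in S, f x ∂μ ∈ Icc (a * μ.real S) (b * μ.real S) := by
  refine ⟨setIntegral_ge_of_const_le_real hS hμS (fun x hx => (hf x hx).1) hint, ?_⟩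
  rw [mul_comm, ← smul_eq_mul, ← setIntegral_const]
  exact setIntegral_mono_on hint (integrableOn_const hμS) hS fun x hx => (hf x hx).2

lemma rpow_mem_Icc_min_max {a b y : ℝ} (s : ℝ) (ha : 0 < a) (hy : y ∈ Icc a b) :
    y ^ s ∈ Icc (min (a ^ s) (b ^ s)) (max (a ^ s) (b ^ s)) := by
  obtain ⟨hay, hyb⟩ := hy
  rcases le_total 0 s with hs | hs
  · exact ⟨min_le_left _ _ |>.trans (Real.rpow_le_rpow ha.le hay hs),
      (Real.rpow_le_rpow (ha.le.trans hay) hyb hs).trans (le_max_right _ _)⟩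
  · exact ⟨min_le_right _ _ |>.trans (Real.rpow_le_rpow_of_nonpos (ha.trans_le hay) hyb hs),
      (Real.rpow_le_rpow_of_nonpos ha hay hs).trans (le_max_left _ _)⟩

lemma one_add_sq_mem_Icc {N ξ : ℝ} (hN : 1 ≤ N) (hξ : ξ ∈ Icc (-N) (-N / 2)) :
    1 + ξ ^ 2 ∈ Icc (1 / 4 * N ^ 2) (2 * N ^ 2) := by
  obtain ⟨hl, hr⟩ := hξ
  constructor <;> nlinarith

lemma one_add_sq_rpow_mem_Icc {N ξ : ℝ} (s : ℝ) (hN : 1 ≤ N) (hξ : ξ ∈ Icc (-N) (-N / 2)) :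
    (1 + ξ ^ 2) ^ s ∈
      Icc (min ((1 / 4 : ℝ) ^ s) (2 ^ s) * N ^ (2 * s))
        (max ((1 / 4 : ℝ) ^ s) (2 ^ s) * N ^ (2 * s)) := by
  have hN0 : 0 ≤ N := by linarith
  have hpow : ∀ c : ℝ, 0 ≤ c → (c * N ^ 2) ^ s = c ^ s * N ^ (2 * s) := fun c hc => by
    rw [Real.mul_rpow hc (by positivity), ← Real.rpow_natCast_mul hN0]; norm_num
  have := rpow_mem_Icc_min_max s (by positivity) (one_add_sq_mem_Icc hN hξ)
  rwa [hpow _ (by norm_num), hpow _ (by norm_num), ← min_mul_of_nonneg _ _ (by positivity),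
    ← max_mul_of_nonneg _ _ (by positivity)] at this

lemma sobolev_integral_fhatA_mem_Icc (s : ℝ) {N : ℝ} (hN : 1 ≤ N) :
    ∫ ξ, (1 + ξ ^ 2) ^ s * ‖fhatA N ξ‖ ^ 2 ∈
      Icc (min ((1 / 4 : ℝ) ^ s) (2 ^ s) * N ^ (2 * s) * (N / 2))
        (max ((1 / 4 : ℝ) ^ s) (2 ^ s) * N ^ (2 * s) * (N / 2)) := by
  have hvol : volume.real (Icc (-N) (-N / 2)) = N / 2 := by
    rw [Real.volume_real_Icc_of_le (by linarith)]; ring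
  have hcont : Continuous fun ξ : ℝ => (1 + ξ ^ 2) ^ s :=
    (by fun_prop : Continuous fun ξ : ℝ => 1 + ξ ^ 2).rpow_const
      fun ξ => Or.inl (by positivity)
  rw [integral_mul_norm_fhatA_sq, ← hvol]
  exact setIntegral_mem_Icc_of_mem_Icc measurableSet_Icc measure_Icc_lt_top.ne
    (fun ξ hξ => one_add_sq_rpow_mem_Icc s hN hξ) hcont.integrableOn_Icc

lemma rpow_half_mul_rpow_two_mul_mul_half {C N : ℝ} (s : ℝ) (hC : 0 ≤ C) (hN : 0 < N) :
    (C * N ^ (2 * s) * (N / 2)) ^ (1 / 2 : ℝ) = (C / 2) ^ (1 / 2 : ℝ) * N ^ (s + 1 / 2) := by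
  have : C * N ^ (2 * s) * (N / 2) = C / 2 * N ^ (2 * (s + 1 / 2)) := by
    rw [mul_add, mul_one_div_cancel two_ne_zero, Real.rpow_add hN, Real.rpow_one]; ring
  rw [this, Real.mul_rpow (by positivity) (by positivity), ← Real.rpow_mul hN.le]
  ring_nf

end HalfWave

theorem counterexample_half_wave :
    (∃ c : ℝ, 0 < c ∧ ∀ γ : ℝ, 1 < γ → ∀ N : ℝ, 1 ≤ N →
      ∀ x ∈ Set.Icc (0 : ℝ) (N ^ (-1 / γ)), c * N ≤ Pstar 1 γ (fhatA N) x) ∧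
    (∀ s : ℝ, ∃ c₁ c₂ : ℝ, 0 < c₁ ∧ 0 < c₂ ∧ ∀ N : ℝ, 1 ≤ N →
      c₁ * N ^ (s + 1 / 2) ≤
        (∫ ξ : ℝ, (1 + ξ ^ 2) ^ s * ‖fhatA N ξ‖ ^ 2) ^ (1 / 2 : ℝ) ∧
      (∫ ξ : ℝ, (1 + ξ ^ 2) ^ s * ‖fhatA N ξ‖ ^ 2) ^ (1 / 2 : ℝ) ≤
        c₂ * N ^ (s + 1 / 2)) := by
  refine ⟨⟨1 / 12, by norm_num,
    fun γ hγ N hN x hx => HalfWave.one_div_twelve_mul_le_Pstar_fhatA hγ hN hx⟩, fun s => ?_⟩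
  set m := min ((1 / 4 : ℝ) ^ s) (2 ^ s)
  set M := max ((1 / 4 : ℝ) ^ s) (2 ^ s)
  have hm : 0 < m := lt_min (by positivity) (by positivity)
  have hM : 0 < M := hm.trans_le min_le_max
  refine ⟨(m / 2) ^ (1 / 2 : ℝ), (M / 2) ^ (1 / 2 : ℝ), by positivity, by positivity,
    fun N hN => ?_⟩
  have hN0 : 0 < N := by linarith
  obtain ⟨hlow, hhigh⟩ := HalfWave.sobolev_integral_fhatA_mem_Icc s hN
  rw [← HalfWave.rpow_half_mul_rpow_two_mul_mul_half s hm.le hN0,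
    ← HalfWave.rpow_half_mul_rpow_two_mul_mul_half s hM.le hN0]
  exact ⟨Real.rpow_le_rpow (by positivity) hlow (by norm_num),
    Real.rpow_le_rpow ((by positivity : (0 : ℝ) ≤ _).trans hlow) hhigh (by norm_num)⟩
end

section
/- Let φ be real-valued and smooth on (a,b) with |φ'(x)| ≥ 1 for all x ∈ (a,b) and φ' monotone, and let ψ be smooth complex-valued on [a,b]. Then |∫_a^b e^{iλφ(x)} ψ(x) dx| ≤ c λ^{-1} (|ψ(b)| + ∫_a^b |ψ'(x)| dx) for all λ > 0, with c an absolute constant independent of φ, ψ, λ. -/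
open MeasureTheory intervalIntegral Set

lemma vdc_mono_deriv_nonneg {g : ℝ → ℝ} {s : Set ℝ} (hs : IsOpen s) (hg : MonotoneOn g s)
    {x d : ℝ} (hx : x ∈ s) (hd : HasDerivAt g d x) : 0 ≤ d := by
  have h1 : Filter.Tendsto (slope g x) (nhdsWithin x (Set.Ioi x)) (nhds d) :=
    (hasDerivAt_iff_tendsto_slope.1 hd).mono_left
      (nhdsWithin_mono x (fun y hy => ne_of_gt hy))
  refine ge_of_tendsto h1 ?_
  filter_upwards [self_mem_nhdsWithin, nhdsWithin_le_nhds (hs.mem_nhds hx)] with y hy hys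
  have : 0 ≤ (g y - g x) / (y - x) :=
    div_nonneg (sub_nonneg.2 (hg hx hys (le_of_lt hy))) (sub_nonneg.2 (le_of_lt hy))
  simpa [slope_def_field, div_eq_mul_inv] using this

lemma vdc_anti_deriv_nonpos {g : ℝ → ℝ} {s : Set ℝ} (hs : IsOpen s) (hg : AntitoneOn g s)
    {x d : ℝ} (hx : x ∈ s) (hd : HasDerivAt g d x) : d ≤ 0 := by
  have := vdc_mono_deriv_nonneg hs hg.neg hx hd.neg
  linarith

lemma vdc_inv_anti {u v : ℝ} (hu : 0 < u) (huv : u ≤ v) : v⁻¹ ≤ u⁻¹ := by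
  have hv : 0 < v := lt_of_lt_of_le hu huv
  rw [inv_le_inv₀ hv hu]
  exact huv

lemma vdc_inv_anti_neg {u v : ℝ} (hv : v < 0) (huv : u ≤ v) : v⁻¹ ≤ u⁻¹ := by
  have h := vdc_inv_anti (neg_pos.2 hv) (neg_le_neg huv)
  rw [inv_neg, inv_neg] at h
  linarith
theorem van_der_corput_first_order :
    ∃ c : ℝ, 0 < c ∧ ∀ a b : ℝ, a < b → ∀ φ : ℝ → ℝ, ∀ ψ : ℝ → ℂ,
      ContDiffOn ℝ (⊤ : ℕ∞) φ (Set.Ioo a b) →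
      (∀ x ∈ Set.Ioo a b, 1 ≤ |deriv φ x|) →
      (MonotoneOn (deriv φ) (Set.Ioo a b) ∨ AntitoneOn (deriv φ) (Set.Ioo a b)) →
      ContDiffOn ℝ (⊤ : ℕ∞) ψ (Set.Icc a b) →
      ∀ lam : ℝ, 0 < lam →
        ‖∫ x in a..b, Complex.exp (Complex.I * ((lam * φ x : ℝ) : ℂ)) * ψ x‖ ≤
          c * lam⁻¹ * (‖ψ b‖ + ∫ x in a..b, ‖deriv ψ x‖) := by
  refine ⟨5, by norm_num, ?_⟩
  intro a b hab φ ψ hφ hφ' hmono hψ lam hlam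
  set f := deriv φ with hf_def
  have hφd : ∀ x ∈ Ioo a b, HasDerivAt φ (f x) x := fun x hx =>
    ((hφ.differentiableOn (by simp) x hx).differentiableAt (isOpen_Ioo.mem_nhds hx)).hasDerivAt
  have hfs : ContDiffOn ℝ (⊤ : ℕ∞) f (Ioo a b) := hφ.deriv_of_isOpen (m := (⊤ : ℕ∞)) isOpen_Ioo (by simp)
  have hfc : ContinuousOn f (Ioo a b) := hfs.continuousOn
  have hfnz : ∀ x ∈ Ioo a b, f x ≠ 0 := by
    intro x hx h0
    have := hφ' x hx
    rw [h0] at this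
    norm_num at this
  have hsign : (∀ x ∈ Ioo a b, 1 ≤ f x) ∨ (∀ x ∈ Ioo a b, f x ≤ -1) := by
    by_contra h
    push_neg at h
    obtain ⟨⟨x, hx, hx1⟩, ⟨y, hy, hy1⟩⟩ := h
    have hxneg : f x ≤ -1 := by
      rcases le_abs.1 (hφ' x hx) with h | h
      · exact absurd h (not_le.2 hx1)
      · linarith
    have hypos : 1 ≤ f y := by
      rcases le_abs.1 (hφ' y hy) with h | h
      · exact h
      · linarith
    have hsub : uIcc x y ⊆ Ioo a b := (Set.ordConnected_Ioo).uIcc_subset hx hy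
    have hiv := intermediate_value_uIcc (hfc.mono hsub)
    have h0 : (0 : ℝ) ∈ uIcc (f x) (f y) := Set.mem_uIcc.2 (Or.inl ⟨by linarith, by linarith⟩)
    obtain ⟨z, hz, hz0⟩ := hiv h0
    exact hfnz z (hsub hz) hz0
  set g : ℝ → ℝ := fun x => (f x)⁻¹ with hg_def
  have hg1 : ∀ x ∈ Ioo a b, |g x| ≤ 1 := by
    intro x hx
    rw [hg_def]
    rw [abs_inv]
    have h1 : (1:ℝ) ≤ |f x| := hφ' x hx
    rw [inv_le_one_iff₀]
    right; exact h1
  have hgs : ContDiffOn ℝ (⊤ : ℕ∞) g (Ioo a b) := hfs.inv hfnz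
  have hgc : ContinuousOn g (Ioo a b) := hgs.continuousOn
  have hgd : ∀ x ∈ Ioo a b, HasDerivAt g (deriv g x) x := fun x hx =>
    ((hgs.differentiableOn (by simp) x hx).differentiableAt (isOpen_Ioo.mem_nhds hx)).hasDerivAt
  have hg'c : ContinuousOn (deriv g) (Ioo a b) := (hgs.deriv_of_isOpen (m := (⊤ : ℕ∞)) isOpen_Ioo (by simp)).continuousOn
  have hgmono : MonotoneOn g (Ioo a b) ∨ AntitoneOn g (Ioo a b) := by
    rcases hsign with hpos | hneg
    · rcases hmono with hm | hm
      · right; intro x hx y hy hxy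
        exact vdc_inv_anti (by linarith [hpos x hx]) (hm hx hy hxy)
      · left; intro x hx y hy hxy
        exact vdc_inv_anti (by linarith [hpos y hy]) (hm hx hy hxy)
    · rcases hmono with hm | hm
      · right; intro x hx y hy hxy
        exact vdc_inv_anti_neg (by linarith [hneg y hy]) (hm hx hy hxy)
      · left; intro x hx y hy hxy
        exact vdc_inv_anti_neg (by linarith [hneg x hx]) (hm hx hy hxy)
  -- psi facts
  have hψc : ContinuousOn ψ (Icc a b) := hψ.continuousOn
  set ψ' : ℝ → ℂ := derivWithin ψ (Icc a b) with hψ'_def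
  have hψ'c : ContinuousOn ψ' (Icc a b) :=
    hψ.continuousOn_derivWithin (uniqueDiffOn_Icc hab) (by simp)
  have hψd : ∀ x ∈ Ioo a b, HasDerivAt ψ (deriv ψ x) x := by
    intro x hx
    exact ((hψ.differentiableOn (by simp) x (Ioo_subset_Icc_self hx)).differentiableAt
      (Icc_mem_nhds hx.1 hx.2)).hasDerivAt
  have hψ'eq : ∀ x ∈ Ioo a b, deriv ψ x = ψ' x := by
    intro x hx
    rw [hψ'_def, derivWithin_of_mem_nhds (Icc_mem_nhds hx.1 hx.2)]
  have hdψc : ContinuousOn (deriv ψ) (Ioo a b) :=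
    (hψ'c.mono Ioo_subset_Icc_self).congr hψ'eq
  set K : ℝ := ∫ x in a..b, ‖deriv ψ x‖ with hK_def
  have hKint : IntervalIntegrable (fun x => ‖deriv ψ x‖) volume a b := by
    have h1 : IntervalIntegrable (fun x => ‖ψ' x‖) volume a b := by
      apply ContinuousOn.intervalIntegrable
      rw [uIcc_of_le hab.le]
      exact hψ'c.norm
    rw [intervalIntegrable_iff_integrableOn_Ioc_of_le hab.le] at h1 ⊢
    apply h1.congr_fun_ae
    rw [← Measure.restrict_congr_set Ioo_ae_eq_Ioc]
    filter_upwards [ae_restrict_mem measurableSet_Ioo] with x hx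
    rw [hψ'eq x hx]
  have hK0 : 0 ≤ K := by
    rw [hK_def]
    exact intervalIntegral.integral_nonneg hab.le (fun x _ => norm_nonneg _)
  have hKsub : ∀ x y, a ≤ x → x ≤ y → y ≤ b →
      (∫ t in x..y, ‖deriv ψ t‖) ≤ K := by
    intro x y hax hxy hyb
    exact intervalIntegral.integral_mono_interval hax hxy hyb
      (Filter.Eventually.of_forall (fun t => norm_nonneg _)) hKint
  set M : ℝ := ‖ψ b‖ + K with hM_def
  have hM0 : 0 ≤ M := add_nonneg (norm_nonneg _) hK0
  have hM : ∀ x ∈ Icc a b, ‖ψ x‖ ≤ M := by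
    intro x hx
    have hftc : (∫ y in x..b, deriv ψ y) = ψ b - ψ x := by
      apply integral_eq_sub_of_hasDeriv_right_of_le hx.2
        (hψc.mono (Icc_subset_Icc hx.1 le_rfl))
      · intro y hy
        exact (hψd y ⟨lt_of_le_of_lt hx.1 hy.1, hy.2⟩).hasDerivWithinAt
      · have h1 : IntervalIntegrable (fun t => ψ' t) volume x b := by
          apply ContinuousOn.intervalIntegrable
          rw [uIcc_of_le hx.2]
          exact hψ'c.mono (Icc_subset_Icc hx.1 le_rfl)
        rw [intervalIntegrable_iff_integrableOn_Ioc_of_le hx.2] at h1 ⊢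
        apply h1.congr_fun_ae
        apply Filter.EventuallyEq.symm
        rw [← Measure.restrict_congr_set Ioo_ae_eq_Ioc]
        filter_upwards [ae_restrict_mem measurableSet_Ioo] with t ht
        exact hψ'eq t ⟨lt_of_le_of_lt hx.1 ht.1, ht.2⟩
    have h2 : ‖ψ x‖ ≤ ‖ψ b‖ + ‖∫ y in x..b, deriv ψ y‖ := by
      have : ψ x = ψ b - (ψ b - ψ x) := by ring
      rw [this, ← hftc]
      exact norm_sub_le _ _
    have h3 : ‖∫ y in x..b, deriv ψ y‖ ≤ ∫ y in x..b, ‖deriv ψ y‖ :=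
      intervalIntegral.norm_integral_le_integral_norm hx.2
    have h4 := hKsub x b hx.1 hx.2 le_rfl
    rw [hM_def]; linarith
  -- oscillatory factor
  set E : ℝ → ℂ := fun x => Complex.exp (Complex.I * ((lam * φ x : ℝ) : ℂ)) with hE_def
  have hE1 : ∀ x, ‖E x‖ = 1 := by
    intro x
    rw [hE_def]
    simp [Complex.norm_exp]
  set F : ℝ → ℂ := fun x => E x * ψ x with hF_def
  have hFnorm : ∀ x ∈ Icc a b, ‖F x‖ ≤ M := by
    intro x hx
    rw [hF_def]
    simp only [norm_mul, hE1, one_mul]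
    exact hM x hx
  have hEc : ContinuousOn E (Ioo a b) := by
    apply Complex.continuous_exp.comp_continuousOn
    exact continuousOn_const.mul
      (Complex.continuous_ofReal.comp_continuousOn (continuousOn_const.mul hφ.continuousOn))
  have hFc : ContinuousOn F (Ioo a b) :=
    hEc.mul (hψc.mono Ioo_subset_Icc_self)
  have hFi : IntervalIntegrable F volume a b := by
    rw [intervalIntegrable_iff_integrableOn_Ioc_of_le hab.le]
    rw [IntegrableOn, ← Measure.restrict_congr_set Ioo_ae_eq_Ioc]
    apply Integrable.mono' (g := fun _ => M)
    · exact integrableOn_const measure_Ioo_lt_top.ne (by simp)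
    · exact hFc.aestronglyMeasurable measurableSet_Ioo
    · filter_upwards [ae_restrict_mem measurableSet_Ioo] with x hx
      exact hFnorm x (Ioo_subset_Icc_self hx)
  -- key estimate on interior subintervals
  have key : ∀ a' b', a < a' → a' < b' → b' < b →
      ‖∫ x in a'..b', F x‖ ≤ lam⁻¹ * (4 * M + K) := by
    intro a' b' ha' hab' hb'
    have hsub : Icc a' b' ⊆ Ioo a b := fun x hx =>
      ⟨lt_of_lt_of_le ha' hx.1, lt_of_le_of_lt hx.2 hb'⟩
    have huIcc : uIcc a' b' = Icc a' b' := uIcc_of_le hab'.le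
    have hsubab : Icc a' b' ⊆ Icc a b := hsub.trans Ioo_subset_Icc_self
    set u : ℝ → ℂ := fun x => (g x : ℂ) * ψ x with hu_def
    set u' : ℝ → ℂ := fun x => ((deriv g x : ℝ) : ℂ) * ψ x + (g x : ℂ) * deriv ψ x with hu'_def
    set v : ℝ → ℂ := fun x => (Complex.I * lam)⁻¹ * E x with hv_def
    set v' : ℝ → ℂ := fun x => (f x : ℂ) * E x with hv'_def
    have hIlam : (Complex.I * lam) ≠ 0 :=
      mul_ne_zero Complex.I_ne_zero (Complex.ofReal_ne_zero.2 hlam.ne')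
    have hu : ∀ x ∈ uIcc a' b', HasDerivAt u (u' x) x := by
      intro x hx
      have hx' : x ∈ Ioo a b := hsub (huIcc ▸ hx)
      exact ((hgd x hx').ofReal_comp).mul (hψd x hx')
    have hv : ∀ x ∈ uIcc a' b', HasDerivAt v (v' x) x := by
      intro x hx
      have hx' : x ∈ Ioo a b := hsub (huIcc ▸ hx)
      have hc : HasDerivAt (fun y => Complex.I * ((lam * φ y : ℝ) : ℂ))
          (Complex.I * ((lam * f x : ℝ) : ℂ)) x :=
        (((hφd x hx').const_mul lam).ofReal_comp).const_mul Complex.I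
      have hE' : HasDerivAt E (E x * (Complex.I * ((lam * f x : ℝ) : ℂ))) x := hc.cexp
      have hv0 := hE'.const_mul ((Complex.I * lam)⁻¹)
      have heq : (Complex.I * lam)⁻¹ * (E x * (Complex.I * ((lam * f x : ℝ) : ℂ)))
          = (f x : ℂ) * E x := by
        push_cast
        field_simp
        linear_combination (E x * (f x : ℂ)) * mul_inv_cancel₀ (Complex.ofReal_ne_zero.2 hlam.ne')
      show HasDerivAt (fun y => (Complex.I * (lam:ℂ))⁻¹ * E y) ((f x : ℂ) * E x) x
      rw [← heq]
      exact hv0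
    have hu'int : IntervalIntegrable u' volume a' b' := by
      apply ContinuousOn.intervalIntegrable
      rw [huIcc]
      exact ((Complex.continuous_ofReal.comp_continuousOn (hg'c.mono hsub)).mul
          (hψc.mono hsubab)).add
        ((Complex.continuous_ofReal.comp_continuousOn (hgc.mono hsub)).mul (hdψc.mono hsub))
    have hv'int : IntervalIntegrable v' volume a' b' := by
      apply ContinuousOn.intervalIntegrable
      rw [huIcc]
      exact (Complex.continuous_ofReal.comp_continuousOn (hfc.mono hsub)).mul (hEc.mono hsub)
    have hibp := intervalIntegral.integral_mul_deriv_eq_deriv_mul hu hv hu'int hv'int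
    have hEqOn : EqOn F (fun x => u x * v' x) (uIcc a' b') := by
      intro x hx
      have hx' : x ∈ Ioo a b := hsub (huIcc ▸ hx)
      have hone : (g x : ℂ) * (f x : ℂ) = 1 := by
        rw [← Complex.ofReal_mul]
        rw [hg_def]
        simp [inv_mul_cancel₀ (hfnz x hx')]
      show F x = u x * v' x
      rw [hF_def, hu_def, hv'_def]
      calc E x * ψ x = ((g x : ℂ) * (f x : ℂ)) * (ψ x * E x) := by rw [hone]; ring
        _ = (g x : ℂ) * ψ x * ((f x : ℂ) * E x) := by ring
    rw [intervalIntegral.integral_congr hEqOn, hibp]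
    -- norms
    have hvnorm : ∀ x, ‖v x‖ = lam⁻¹ := by
      intro x
      rw [hv_def]
      simp only [norm_mul, norm_inv, hE1, mul_one]
      simp [Complex.normSq_mul, abs_of_pos hlam]
    have hunorm : ∀ x ∈ Icc a' b', ‖u x‖ ≤ M := by
      intro x hx
      rw [hu_def]
      rw [norm_mul, Complex.norm_real]
      calc ‖g x‖ * ‖ψ x‖ ≤ 1 * M :=
            mul_le_mul (hg1 x (hsub hx)) (hM x (hsubab hx)) (norm_nonneg _) zero_le_one
        _ = M := one_mul M
    -- integral of |deriv g| is at most 2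
    have hgFTC : (∫ x in a'..b', deriv g x) = g b' - g a' := by
      apply intervalIntegral.integral_deriv_eq_sub
      · intro x hx
        exact (hgd x (hsub (huIcc ▸ hx))).differentiableAt
      · apply ContinuousOn.intervalIntegrable
        rw [huIcc]
        exact hg'c.mono hsub
    have habs : |g a'| ≤ 1 := hg1 a' (hsub ⟨le_rfl, hab'.le⟩)
    have habs' : |g b'| ≤ 1 := hg1 b' (hsub ⟨hab'.le, le_rfl⟩)
    have hdg2 : (∫ x in a'..b', |deriv g x|) ≤ 2 := by
      rcases hgmono with hgm | hgm
      · have hpos : ∀ x ∈ Icc a' b', 0 ≤ deriv g x := fun x hx =>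
          vdc_mono_deriv_nonneg isOpen_Ioo hgm (hsub hx) (hgd x (hsub hx))
        have : (∫ x in a'..b', |deriv g x|) = ∫ x in a'..b', deriv g x := by
          apply intervalIntegral.integral_congr
          intro x hx
          exact abs_of_nonneg (hpos x (huIcc ▸ hx))
        rw [this, hgFTC]
        have := abs_le.1 habs
        have := abs_le.1 habs'
        linarith
      · have hneg : ∀ x ∈ Icc a' b', deriv g x ≤ 0 := fun x hx =>
          vdc_anti_deriv_nonpos isOpen_Ioo hgm (hsub hx) (hgd x (hsub hx))
        have : (∫ x in a'..b', |deriv g x|) = ∫ x in a'..b', -(deriv g x) := by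
          apply intervalIntegral.integral_congr
          intro x hx
          exact abs_of_nonpos (hneg x (huIcc ▸ hx))
        rw [this, intervalIntegral.integral_neg, hgFTC]
        have := abs_le.1 habs
        have := abs_le.1 habs'
        linarith
    -- bound the remaining integral
    have hdgint : IntervalIntegrable (fun x => |deriv g x|) volume a' b' := by
      apply ContinuousOn.intervalIntegrable
      rw [huIcc]
      exact (hg'c.mono hsub).abs
    have hdψint : IntervalIntegrable (fun x => ‖deriv ψ x‖) volume a' b' := by
      apply ContinuousOn.intervalIntegrable
      rw [huIcc]
      exact (hdψc.mono hsub).norm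
    have hintbound : ‖∫ x in a'..b', u' x * v x‖
        ≤ lam⁻¹ * (M * 2 + K) := by
      have h1 : ‖∫ x in a'..b', u' x * v x‖ ≤ ∫ x in a'..b', ‖u' x * v x‖ :=
        intervalIntegral.norm_integral_le_integral_norm hab'.le
      have h2 : (∫ x in a'..b', ‖u' x * v x‖)
          ≤ ∫ x in a'..b', (M * |deriv g x| + ‖deriv ψ x‖) * lam⁻¹ := by
        apply intervalIntegral.integral_mono_on hab'.le
        · apply ContinuousOn.intervalIntegrable
          rw [huIcc]
          apply ContinuousOn.norm
          apply ContinuousOn.mul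
          · exact ((Complex.continuous_ofReal.comp_continuousOn (hg'c.mono hsub)).mul
              (hψc.mono hsubab)).add
              ((Complex.continuous_ofReal.comp_continuousOn (hgc.mono hsub)).mul (hdψc.mono hsub))
          · exact continuousOn_const.mul (hEc.mono hsub)
        · exact ((hdgint.const_mul M).add hdψint).mul_const _
        · intro x hx
          rw [norm_mul, hvnorm]
          apply mul_le_mul_of_nonneg_right _ (inv_nonneg.2 hlam.le)
          rw [hu'_def]
          calc ‖((deriv g x : ℝ) : ℂ) * ψ x + (g x : ℂ) * deriv ψ x‖
              ≤ ‖((deriv g x : ℝ) : ℂ) * ψ x‖ + ‖(g x : ℂ) * deriv ψ x‖ := norm_add_le _ _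
            _ = |deriv g x| * ‖ψ x‖ + |g x| * ‖deriv ψ x‖ := by
                rw [norm_mul, norm_mul, Complex.norm_real, Complex.norm_real]
                rfl
            _ ≤ |deriv g x| * M + 1 * ‖deriv ψ x‖ := by
                apply add_le_add
                · exact mul_le_mul_of_nonneg_left (hM x (hsubab hx)) (abs_nonneg _)
                · exact mul_le_mul_of_nonneg_right (hg1 x (hsub hx)) (norm_nonneg _)
            _ = M * |deriv g x| + ‖deriv ψ x‖ := by ring
      have h3 : (∫ x in a'..b', (M * |deriv g x| + ‖deriv ψ x‖) * lam⁻¹)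
          = (M * (∫ x in a'..b', |deriv g x|) + ∫ x in a'..b', ‖deriv ψ x‖) * lam⁻¹ := by
        rw [intervalIntegral.integral_mul_const,
          intervalIntegral.integral_add (hdgint.const_mul M) hdψint,
          intervalIntegral.integral_const_mul]
      have h4 : (∫ x in a'..b', ‖deriv ψ x‖) ≤ K :=
        hKsub a' b' (le_of_lt ha') hab'.le (le_of_lt hb')
      have h5 : M * (∫ x in a'..b', |deriv g x|) ≤ M * 2 :=
        mul_le_mul_of_nonneg_left hdg2 hM0
      calc ‖∫ x in a'..b', u' x * v x‖ ≤ _ := h1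
        _ ≤ _ := h2
        _ = _ := h3
        _ ≤ (M * 2 + K) * lam⁻¹ := by
            apply mul_le_mul_of_nonneg_right _ (inv_nonneg.2 hlam.le)
            linarith
        _ = lam⁻¹ * (M * 2 + K) := by ring
    -- assemble
    have hterm1 : ‖u b' * v b'‖ ≤ M * lam⁻¹ := by
      rw [norm_mul, hvnorm]
      exact mul_le_mul_of_nonneg_right (hunorm b' ⟨hab'.le, le_rfl⟩) (inv_nonneg.2 hlam.le)
    have hterm2 : ‖u a' * v a'‖ ≤ M * lam⁻¹ := by
      rw [norm_mul, hvnorm]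
      exact mul_le_mul_of_nonneg_right (hunorm a' ⟨le_rfl, hab'.le⟩) (inv_nonneg.2 hlam.le)
    calc ‖u b' * v b' - u a' * v a' - ∫ x in a'..b', u' x * v x‖
        ≤ ‖u b' * v b' - u a' * v a'‖ + ‖∫ x in a'..b', u' x * v x‖ := norm_sub_le _ _
      _ ≤ ‖u b' * v b'‖ + ‖u a' * v a'‖ + ‖∫ x in a'..b', u' x * v x‖ := by
          have := norm_sub_le (u b' * v b') (u a' * v a')
          linarith
      _ ≤ M * lam⁻¹ + M * lam⁻¹ + lam⁻¹ * (M * 2 + K) := by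
          linarith
      _ = lam⁻¹ * (4 * M + K) := by ring
  -- pass to the closed interval via an epsilon argument
  have final : ‖∫ x in a..b, F x‖ ≤ lam⁻¹ * (4 * M + K) := by
    apply le_of_forall_pos_le_add
    intro ε hε
    set δ : ℝ := min ((b - a) / 4) (ε / (2 * (M + 1))) with hδ_def
    have hδpos : 0 < δ := lt_min (by linarith) (by positivity)
    have hδ1 : δ ≤ (b - a) / 4 := min_le_left _ _
    have hδ2 : δ ≤ ε / (2 * (M + 1)) := min_le_right _ _
    set a' : ℝ := a + δ with ha'_def
    set b' : ℝ := b - δ with hb'_def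
    have ha' : a < a' := by rw [ha'_def]; linarith
    have hb' : b' < b := by rw [hb'_def]; linarith
    have hab' : a' < b' := by rw [ha'_def, hb'_def]; linarith
    have i1 : IntervalIntegrable F volume a a' := by
      apply hFi.mono_set
      rw [uIcc_of_le hab.le, uIcc_of_le ha'.le]
      exact Icc_subset_Icc le_rfl (by linarith)
    have i2 : IntervalIntegrable F volume a' b' := by
      apply hFi.mono_set
      rw [uIcc_of_le hab.le, uIcc_of_le hab'.le]
      exact Icc_subset_Icc (by linarith) (by linarith)
    have i3 : IntervalIntegrable F volume b' b := by
      apply hFi.mono_set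
      rw [uIcc_of_le hab.le, uIcc_of_le hb'.le]
      exact Icc_subset_Icc (by linarith) le_rfl
    have i23 : IntervalIntegrable F volume a' b := by
      apply hFi.mono_set
      rw [uIcc_of_le hab.le, uIcc_of_le (by linarith : a' ≤ b)]
      exact Icc_subset_Icc (by linarith) le_rfl
    have h12 := intervalIntegral.integral_add_adjacent_intervals i2 i3
    have h01 := intervalIntegral.integral_add_adjacent_intervals i1 i23
    have hsplit : (∫ x in a..b, F x)
        = (∫ x in a..a', F x) + (∫ x in a'..b', F x) + (∫ x in b'..b, F x) := by
      rw [← h01, ← h12]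
      ring
    have hb1 : ‖∫ x in a..a', F x‖ ≤ M * δ := by
      have := intervalIntegral.norm_integral_le_of_norm_le_const (C := M) (a := a) (b := a')
        (f := F) ?_
      · rwa [show |a' - a| = δ by rw [ha'_def]; rw [abs_of_nonneg] <;> linarith] at this
      · intro x hx
        rw [uIoc_of_le ha'.le] at hx
        exact hFnorm x ⟨hx.1.le, by linarith [hx.2]⟩
    have hb3 : ‖∫ x in b'..b, F x‖ ≤ M * δ := by
      have := intervalIntegral.norm_integral_le_of_norm_le_const (C := M) (a := b') (b := b)
        (f := F) ?_
      · rwa [show |b - b'| = δ by rw [hb'_def]; rw [abs_of_nonneg] <;> linarith] at this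
      · intro x hx
        rw [uIoc_of_le hb'.le] at hx
        exact hFnorm x ⟨by linarith [hx.1], hx.2⟩
    have hb2 := key a' b' ha' hab' hb'
    have hMδ : M * δ + M * δ ≤ ε := by
      have hM1 : 0 < M + 1 := by linarith
      have h2 : 2 * (M + 1) * δ ≤ ε := by
        rw [ha'_def] at *
        calc 2 * (M + 1) * δ ≤ 2 * (M + 1) * (ε / (2 * (M + 1))) := by
              apply mul_le_mul_of_nonneg_left hδ2 (by linarith)
          _ = ε := by field_simp
      nlinarith [hδpos.le]
    calc ‖∫ x in a..b, F x‖
        = ‖(∫ x in a..a', F x) + (∫ x in a'..b', F x) + (∫ x in b'..b, F x)‖ := by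
          rw [← hsplit]
      _ ≤ ‖(∫ x in a..a', F x) + (∫ x in a'..b', F x)‖ + ‖∫ x in b'..b, F x‖ :=
          norm_add_le _ _
      _ ≤ ‖∫ x in a..a', F x‖ + ‖∫ x in a'..b', F x‖ + ‖∫ x in b'..b, F x‖ := by
          have := norm_add_le (∫ x in a..a', F x) (∫ x in a'..b', F x)
          linarith
      _ ≤ lam⁻¹ * (4 * M + K) + ε := by linarith
  have hgoal : ‖∫ x in a..b, Complex.exp (Complex.I * ((lam * φ x : ℝ) : ℂ)) * ψ x‖
      ≤ lam⁻¹ * (4 * M + K) := final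
  calc ‖∫ x in a..b, Complex.exp (Complex.I * ((lam * φ x : ℝ) : ℂ)) * ψ x‖
      ≤ lam⁻¹ * (4 * M + K) := hgoal
    _ ≤ 5 * lam⁻¹ * (‖ψ b‖ + K) := by
        rw [hM_def]
        have h1 : 0 ≤ lam⁻¹ := inv_nonneg.2 hlam.le
        have h2 : 0 ≤ ‖ψ b‖ := norm_nonneg _
        nlinarith
end
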